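/- Let X be a compact metric space, (T_n)_{n≥1} a sequence of homeomorphisms of X converging uniformly to a homeomorphism T, μ a T-invariant Borel probability measure, and (μ_n)_{n≥1} Borel probability measures converging weakly to μ (each μ_n being T_n-invariant). Let m ≥ 1 and let A_0, …, A_{m−1} ⊆ X be Borel sets with μ(∂A_j) = 0 for every 0 ≤ j ≤ m−1. Then μ_n(A_0 ∩ T_n^{−1}A_1 ∩ ⋯ ∩ T_n^{−(m−1)}A_{m−1}) → μ(A_0 ∩ T^{−1}A_1 ∩ ⋯ ∩ T^{−(m−1)}A_{m−1}) as n → ∞. -/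

import Mathlib

open MeasureTheory Filter Topology
open scoped BoundedContinuousFunction

/-! The orbit map `x ↦ (x, T x, …, T^{m-1} x)` into `X^m` turns the cylinder set into the box
`∏ A_j`. Since `T_n^j → T^j` uniformly, the push-forwards of `μ_n` under the orbit maps of `T_n`
converge weakly to the push-forward of `μ` under the orbit map of `T`. The boundary of the box lies
in `⋃_j π_j⁻¹ ∂A_j`, which has measure at most `∑_j μ(T^{-j} ∂A_j) = ∑_j μ(∂A_j) = 0` by
invariance, so the portmanteau theorem applies. -/

section UniformConvergence

variable {ι α β γ : Type*} {p : Filter ι} [UniformSpace β] [UniformSpace γ]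

theorem tendstoUniformly_pi_iff {κ : Type*} {π : κ → Type*} [∀ k, UniformSpace (π k)]
    {F : ι → α → ∀ k, π k} {f : α → ∀ k, π k} :
    TendstoUniformly F f p ↔ ∀ k, TendstoUniformly (fun i x => F i x k) (fun x => f x k) p := by
  simp only [tendstoUniformly_iff_tendsto, Pi.uniformity, tendsto_iInf, tendsto_comap_iff]
  rfl

theorem TendstoUniformly.comp_of_uniformContinuous {F : ι → β → γ} {f : β → γ}
    {G : ι → α → β} {g : α → β} (hF : TendstoUniformly F f p) (hf : UniformContinuous f)
    (hG : TendstoUniformly G g p) : TendstoUniformly (fun i => F i ∘ G i) (f ∘ g) p := by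
  intro u hu
  obtain ⟨v, hv, hvu⟩ := comp_mem_uniformity_sets hu
  filter_upwards [hf.comp_tendstoUniformly hG v hv, hF v hv] with i hfG hFG x
  exact hvu (SetRel.prodMk_mem_comp (hfG x) (hFG (G i x)))

theorem TendstoUniformly.iterate {F : ι → β → β} {f : β → β} (hF : TendstoUniformly F f p)
    (hf : UniformContinuous f) (j : ℕ) : TendstoUniformly (fun i => (F i)^[j]) f^[j] p := by
  induction j with
  | zero => exact fun u hu => Eventually.of_forall fun _ _ => refl_mem_uniformity hu
  | succ j ih =>
    simp only [Function.iterate_succ']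
    exact hF.comp_of_uniformContinuous hf ih

end UniformConvergence

theorem frontier_univ_pi_subset {κ : Type*} [Finite κ] {π : κ → Type*}
    [∀ k, TopologicalSpace (π k)] (A : ∀ k, Set (π k)) :
    frontier (Set.univ.pi A) ⊆ ⋃ k, Function.eval k ⁻¹' frontier (A k) := by
  rintro x ⟨hclosure, hinterior⟩
  rw [closure_pi_set, Set.mem_univ_pi] at hclosure
  rw [interior_pi_set Set.finite_univ, Set.mem_univ_pi, not_forall] at hinterior
  obtain ⟨k, hk⟩ := hinterior
  exact Set.mem_iUnion.mpr ⟨k, hclosure k, hk⟩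

theorem MeasureTheory.measure_map_frontier_univ_pi_eq_zero {X κ : Type*} [Finite κ] {π : κ → Type*}
    [∀ k, TopologicalSpace (π k)] [∀ k, MeasurableSpace (π k)] [∀ k, OpensMeasurableSpace (π k)]
    [MeasurableSpace X] {μ : Measure X} {Φ : X → ∀ k, π k} (hΦ : Measurable Φ)
    {A : ∀ k, Set (π k)} (hA : ∀ k, μ ((fun x => Φ x k) ⁻¹' frontier (A k)) = 0) :
    μ.map Φ (frontier (Set.univ.pi A)) = 0 := by
  refine measure_mono_null (frontier_univ_pi_subset A) ?_
  rw [Measure.map_apply hΦ (.iUnion fun k => isClosed_frontier.measurableSet.preimage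
    (measurable_pi_apply k)), Set.preimage_iUnion]
  exact measure_iUnion_null hA

theorem MeasureTheory.ProbabilityMeasure.tendsto_map_of_tendstoUniformly {ι X Y : Type*} {L : Filter ι}
    [TopologicalSpace X] [MeasurableSpace X] [OpensMeasurableSpace X]
    [UniformSpace Y] [CompactSpace Y] [MeasurableSpace Y] [BorelSpace Y]
    {μs : ι → ProbabilityMeasure X} {μ : ProbabilityMeasure X} (hμ : Tendsto μs L (𝓝 μ))
    {Φs : ι → X → Y} {Φ : X → Y} (hΦs : ∀ i, Continuous (Φs i)) (hΦ : Continuous Φ)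
    (hunif : TendstoUniformly Φs Φ L) :
    Tendsto (fun i => (μs i).map (hΦs i).aemeasurable) L (𝓝 (μ.map hΦ.aemeasurable)) := by
  rw [ProbabilityMeasure.tendsto_iff_forall_integral_tendsto] at hμ ⊢
  intro g
  let Gs : ι → X →ᵇ ℝ := fun i => g.compContinuous ⟨Φs i, hΦs i⟩
  let G : X →ᵇ ℝ := g.compContinuous ⟨Φ, hΦ⟩
  have hGs : Tendsto Gs L (𝓝 G) :=
    BoundedContinuousFunction.tendsto_iff_tendstoUniformly.mpr
      ((CompactSpace.uniformContinuous_of_continuous g.continuous).comp_tendstoUniformly hunif)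
  have hdist : ∀ i, dist (∫ x, G x ∂(μs i : Measure X)) (∫ x, Gs i x ∂(μs i : Measure X))
      ≤ dist G (Gs i) := fun i => by
    rw [dist_eq_norm, dist_eq_norm, ← integral_sub (G.integrable _) ((Gs i).integrable _)]
    exact (G - Gs i).norm_integral_le_norm _
  have hmap : ∀ i, ∫ y, g y ∂((μs i).map (hΦs i).aemeasurable : Measure Y) =
      ∫ x, Gs i x ∂(μs i : Measure X) :=
    fun i => integral_map (hΦs i).aemeasurable g.continuous.aestronglyMeasurable
  rw [show ∫ y, g y ∂(μ.map hΦ.aemeasurable : Measure Y) = ∫ x, G x ∂(μ : Measure X) from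
    integral_map hΦ.aemeasurable g.continuous.aestronglyMeasurable]
  simp only [hmap]
  refine (hμ G).congr_dist (squeeze_zero (fun _ => dist_nonneg) hdist ?_)
  exact (tendsto_iff_dist_tendsto_zero.mp hGs).congr fun i => dist_comm _ _

theorem stmt4_general {X : Type*} [MetricSpace X] [CompactSpace X] [MeasurableSpace X] [BorelSpace X]
    (T : ℕ → X ≃ₜ X) (Tlim : X ≃ₜ X)
    (hunif : TendstoUniformly (fun n x => T n x) (⇑Tlim) atTop)
    (μ : Measure X) [IsProbabilityMeasure μ]
    (hμinv : ∀ B : Set X, MeasurableSet B → μ (⇑Tlim ⁻¹' B) = μ B)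
    (μn : ℕ → Measure X) (hprob : ∀ n, IsProbabilityMeasure (μn n))
    (hweak : ∀ g : C(X, ℝ), Tendsto (fun n => ∫ x, g x ∂(μn n)) atTop (𝓝 (∫ x, g x ∂μ)))
    (m : ℕ)
    (A : Fin m → Set X) (hA : ∀ j, MeasurableSet (A j))
    (hbd : ∀ j, μ (frontier (A j)) = 0) :
    Tendsto (fun n => (μn n) (⋂ j : Fin m, (⇑(T n))^[(j : ℕ)] ⁻¹' A j)) atTop
      (𝓝 (μ (⋂ j : Fin m, (⇑Tlim)^[(j : ℕ)] ⁻¹' A j))) := by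
  let orbit : (X → X) → X → Fin m → X := fun f x j => f^[j] x
  have horbit : ∀ f : X ≃ₜ X, Continuous (orbit f) := fun f =>
    continuous_pi fun j => f.continuous.iterate j
  let P : ProbabilityMeasure X := ⟨μ, inferInstance⟩
  let Ps : ℕ → ProbabilityMeasure X := fun n => ⟨μn n, hprob n⟩
  have hconv : Tendsto Ps atTop (𝓝 P) :=
    ProbabilityMeasure.tendsto_iff_forall_integral_tendsto.mpr fun g => hweak g.toContinuousMap
  have horbit_unif : TendstoUniformly (fun n => orbit (T n)) (orbit Tlim) atTop :=
    tendstoUniformly_pi_iff.mpr fun j =>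
      hunif.iterate (CompactSpace.uniformContinuous_of_continuous Tlim.continuous) j
  have hpres : MeasurePreserving Tlim μ μ :=
    ⟨Tlim.continuous.measurable, Measure.ext fun B hB => by
      rw [Measure.map_apply Tlim.continuous.measurable hB, hμinv B hB]⟩
  have hnull : μ.map (orbit Tlim) (frontier (Set.univ.pi A)) = 0 :=
    measure_map_frontier_univ_pi_eq_zero (horbit Tlim).measurable fun j =>
      ((hpres.iterate j).measure_preimage isClosed_frontier.nullMeasurableSet).trans (hbd j)
  have hlim := ProbabilityMeasure.tendsto_measure_of_null_frontier_of_tendsto'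
    (ProbabilityMeasure.tendsto_map_of_tendstoUniformly hconv (fun n => horbit (T n))
      (horbit Tlim) horbit_unif) hnull
  have hpreimage : ∀ f : X → X, orbit f ⁻¹' Set.univ.pi A = ⋂ j : Fin m, f^[(j : ℕ)] ⁻¹' A j :=
    fun f => by ext; simp [orbit]
  simp only [ProbabilityMeasure.toMeasure_map,
    Measure.map_apply (horbit _).measurable (MeasurableSet.univ_pi hA), hpreimage] at hlim
  exact hlim

theorem stmt4 {X : Type*} [MetricSpace X] [CompactSpace X] [MeasurableSpace X] [BorelSpace X]
    (T : ℕ → X ≃ₜ X) (Tlim : X ≃ₜ X)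
    (hunif : TendstoUniformly (fun n x => T n x) (⇑Tlim) atTop)
    (μ : Measure X) [IsProbabilityMeasure μ]
    (hμinv : ∀ B : Set X, MeasurableSet B → μ (⇑Tlim ⁻¹' B) = μ B)
    (μn : ℕ → Measure X) (hprob : ∀ n, IsProbabilityMeasure (μn n))
    (hinv : ∀ n, ∀ B : Set X, MeasurableSet B → (μn n) (⇑(T n) ⁻¹' B) = (μn n) B)
    (hweak : ∀ g : C(X, ℝ), Tendsto (fun n => ∫ x, g x ∂(μn n)) atTop (𝓝 (∫ x, g x ∂μ)))
    (m : ℕ) (hm : 1 ≤ m)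
    (A : Fin m → Set X) (hA : ∀ j, MeasurableSet (A j))
    (hbd : ∀ j, μ (frontier (A j)) = 0) :
    Tendsto (fun n => (μn n) (⋂ j : Fin m, (⇑(T n))^[(j : ℕ)] ⁻¹' A j)) atTop
      (𝓝 (μ (⋂ j : Fin m, (⇑Tlim)^[(j : ℕ)] ⁻¹' A j))) :=
  stmt4_general T Tlim hunif μ hμinv μn hprob hweak m A hA hbd
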